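/- arXiv:1608.05681 — 3 statements merged into one kernel-verified Lean document; each statement's English description precedes it below -/
import Mathlib

section
/- Let A be a commutative ℂ-algebra and let p, q : A → ℂ be two ℂ-algebra homomorphisms with distinct kernels. Then for every n ≥ 1 and every g ∈ SL_n(ℂ) there exists γ ∈ SL_n(A) such that the matrix obtained from γ by applying p to each entry is the identity matrix and the matrix obtained from γ by applying q to each entry is g. -/
open Matrix

set_option linter.unusedSectionVars false in
lemma mapTransvection' {m : Type*} [Fintype m] [DecidableEq m]
    {R S : Type*} [CommRing R] [CommRing S] (f : R →+* S)
    (i j : m) (c : R) :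
    (Matrix.transvection i j c).map f = Matrix.transvection i j (f c) := by
  ext a b
  simp [Matrix.transvection, Matrix.map_apply, Matrix.add_apply, Matrix.one_apply,
    Matrix.single, apply_ite f]

lemma whitehead' {m : Type*} [Fintype m] [DecidableEq m]
    {i j : m} (hij : i ≠ j) {u : ℂ} (hu : u ≠ 0) :
    transvection i j u * transvection j i (-u⁻¹) * transvection i j u *
      (transvection i j (-1) * transvection j i 1 * transvection i j (-1)) =
    diagonal (fun k => if k = i then u else if k = j then u⁻¹ else 1) := by
  simp only [Matrix.transvection]
  simp only [mul_add, add_mul, one_mul, mul_one, Matrix.single_mul_single_same,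
    Matrix.single_mul_single_of_ne, hij, hij.symm,
    add_zero, zero_add, mul_zero, zero_mul]
  ext a b
  by_cases hai : a = i <;> by_cases hbi : b = i <;> by_cases haj : a = j <;> by_cases hbj : b = j <;>
    subst_vars <;>
    simp_all [Matrix.add_apply, Matrix.one_apply, Matrix.diagonal_apply, Ne.symm]


/-- Lemma 3.1 of the paper, for `G = SL_n`: if `A` is a commutative `ℂ`-algebra and
`p, q : A → ℂ` are `ℂ`-algebra homomorphisms with distinct kernels, then for every `n ≥ 1`
and every `g ∈ SL_n(ℂ)` there is `γ ∈ SL_n(A)` with `p(γ) = 1` and `q(γ) = g`. -/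
theorem stmt0 (A : Type*) [CommRing A] [Algebra ℂ A] (p q : A →ₐ[ℂ] ℂ)
    (hpq : RingHom.ker (p : A →+* ℂ) ≠ RingHom.ker (q : A →+* ℂ))
    (n : ℕ) (hn : 1 ≤ n) (g : Matrix.SpecialLinearGroup (Fin n) ℂ) :
    ∃ γ : Matrix.SpecialLinearGroup (Fin n) A,
      Matrix.SpecialLinearGroup.map (p : A →+* ℂ) γ = 1 ∧
      Matrix.SpecialLinearGroup.map (q : A →+* ℂ) γ = g := by
  -- Step 1: an interpolating element
  obtain ⟨a, hpa, hqa⟩ : ∃ a : A, p a = 0 ∧ q a = 1 := by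
    have hne : ¬ ∀ x : A, p x = 0 ↔ q x = 0 := by
      intro h
      exact hpq (by ext x; simpa [RingHom.mem_ker] using h x)
    push_neg at hne
    obtain ⟨x, hx⟩ := hne
    by_cases h1 : p x = 0
    · have h2 : q x ≠ 0 := by tauto
      refine ⟨(q x)⁻¹ • x, ?_, ?_⟩
      · rw [_root_.map_smul, h1, smul_zero]
      · rw [_root_.map_smul, smul_eq_mul, inv_mul_cancel₀ h2]
    · have h2 : q x = 0 := by tauto
      refine ⟨1 - (p x)⁻¹ • x, ?_, ?_⟩
      · rw [_root_.map_sub, _root_.map_one, _root_.map_smul, smul_eq_mul,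
          inv_mul_cancel₀ h1, sub_self]
      · rw [_root_.map_sub, _root_.map_one, _root_.map_smul, h2, smul_zero, sub_zero]
  -- Step 2: the lifting predicate
  set P : Matrix (Fin n) (Fin n) ℂ → Prop :=
    fun M => ∃ γ : Matrix (Fin n) (Fin n) A, γ.det = 1 ∧
      γ.map (p : A →+* ℂ) = 1 ∧ γ.map (q : A →+* ℂ) = M with hPdef
  have Pmul : ∀ M N, P M → P N → P (M * N) := by
    rintro M N ⟨γ, hγd, hγp, hγq⟩ ⟨δ, hδd, hδp, hδq⟩
    exact ⟨γ * δ, by rw [Matrix.det_mul, hγd, hδd, one_mul],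
      by rw [Matrix.map_mul, hγp, hδp, one_mul],
      by rw [Matrix.map_mul, hγq, hδq]⟩
  have Pone : P 1 := ⟨1, by simp, by simp [Matrix.map_one], by simp [Matrix.map_one]⟩
  have Ptrans : ∀ (i j : Fin n) (hij : i ≠ j) (c : ℂ), P (Matrix.transvection i j c) := by
    intro i j hij c
    refine ⟨Matrix.transvection i j (algebraMap ℂ A c * a), Matrix.det_transvection_of_ne i j hij _,
      ?_, ?_⟩
    · rw [mapTransvection']
      simp [hpa, Matrix.transvection_zero]
    · rw [mapTransvection']
      simp [hqa, AlgHom.commutes]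
  have PD : ∀ (i j : Fin n), i ≠ j → ∀ u : ℂ, u ≠ 0 →
      P (diagonal (fun k => if k = i then u else if k = j then u⁻¹ else 1)) := by
    intro i j hij u hu
    rw [← whitehead' hij hu]
    exact Pmul _ _ (Pmul _ _ (Pmul _ _ (Ptrans _ _ hij _) (Ptrans _ _ hij.symm _))
      (Ptrans _ _ hij _))
      (Pmul _ _ (Pmul _ _ (Ptrans _ _ hij _) (Ptrans _ _ hij.symm _)) (Ptrans _ _ hij _))
  have detD : ∀ (i j : Fin n), i ≠ j → ∀ u : ℂ, u ≠ 0 →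
      Matrix.det (diagonal (fun k => if k = i then u else if k = j then u⁻¹ else 1)) = 1 := by
    intro i j hij u hu
    rw [← whitehead' hij hu]
    simp [Matrix.det_mul, Matrix.det_transvection_of_ne _ _ hij,
      Matrix.det_transvection_of_ne _ _ hij.symm]
  -- Step 3: diagonal matrices of determinant one
  have Pdiag : ∀ (k : ℕ) (D : Fin n → ℂ),
      (Finset.univ.filter fun i => D i ≠ 1).card ≤ k →
      Matrix.det (Matrix.diagonal D) = 1 → P (Matrix.diagonal D) := by
    intro k
    induction k with
    | zero =>
      intro D hcard _
      have hall : ∀ i, D i = 1 := by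
        intro i
        by_contra h
        have : i ∈ Finset.univ.filter fun i => D i ≠ 1 := by simp [h]
        have := Finset.card_pos.2 ⟨i, this⟩
        omega
      have : Matrix.diagonal D = 1 := by
        rw [show D = fun _ => (1 : ℂ) from funext hall, Matrix.diagonal_one]
      rw [this]; exact Pone
    | succ k ih =>
      intro D hcard hdet
      by_cases hall : ∀ i, D i = 1
      · have : Matrix.diagonal D = 1 := by
          rw [show D = fun _ => (1 : ℂ) from funext hall, Matrix.diagonal_one]
        rw [this]; exact Pone
      push_neg at hall
      obtain ⟨i, hi⟩ := hall
      have hprod : ∏ k, D k = 1 := by simpa [Matrix.det_diagonal] using hdet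
      obtain ⟨j, hji, hj⟩ : ∃ j, j ≠ i ∧ D j ≠ 1 := by
        by_contra h
        push_neg at h
        have : ∏ k, D k = D i :=
          Finset.prod_eq_single i (fun b _ hb => h b hb) (by simp)
        exact hi (this.symm.trans hprod)
      have hu : D i ≠ 0 := by
        intro h0
        rw [Matrix.det_diagonal, Finset.prod_eq_zero (Finset.mem_univ i) h0] at hdet
        exact zero_ne_one hdet
      set D' : Fin n → ℂ := fun k => if k = i then 1 else if k = j then D i * D j else D k
        with hD'
      have keyfun : (fun k => D' k * (if k = i then D i else if k = j then (D i)⁻¹ else 1)) = D := by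
        funext k
        simp only [hD']
        split_ifs with h1 h2
        · rw [h1, one_mul]
        · rw [h2, mul_comm (D i) (D j), mul_assoc, mul_inv_cancel₀ hu, mul_one]
        · rw [mul_one]
      have key : Matrix.diagonal D = Matrix.diagonal D' *
          Matrix.diagonal (fun k => if k = i then D i else if k = j then (D i)⁻¹ else 1) := by
        rw [Matrix.diagonal_mul_diagonal, keyfun]
      have hdetD' : Matrix.det (Matrix.diagonal D') = 1 := by
        have := hdet
        rw [key, Matrix.det_mul, detD i j (fun h => hji h.symm) (D i) hu, mul_one] at this
        exact this
      have hsub : (Finset.univ.filter fun k => D' k ≠ 1) ⊆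
          (Finset.univ.filter fun k => D k ≠ 1).erase i := by
        intro k hk
        simp only [Finset.mem_filter, Finset.mem_univ, true_and] at hk
        by_cases h1 : k = i
        · exfalso; apply hk; simp [hD', h1]
        · rw [Finset.mem_erase]
          refine ⟨h1, ?_⟩
          simp only [Finset.mem_filter, Finset.mem_univ, true_and]
          by_cases h2 : k = j
          · subst h2; exact hj
          · intro hD1; apply hk; simp [hD', h1, h2, hD1]
      have hcard' : (Finset.univ.filter fun k => D' k ≠ 1).card ≤ k := by
        have h1 := Finset.card_le_card hsub
        have h2 : i ∈ Finset.univ.filter fun k => D k ≠ 1 := by simp [hi]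
        rw [Finset.card_erase_of_mem h2] at h1
        have := Finset.card_pos.2 ⟨i, h2⟩
        omega
      rw [key]
      exact Pmul _ _ (ih D' hcard' hdetD') (PD i j (fun h => hji h.symm) (D i) hu)
  -- Step 4: conclude by the transvection--diagonal induction principle
  have PM : P (g : Matrix (Fin n) (Fin n) ℂ) := by
    apply Matrix.diagonal_transvection_induction P (g : Matrix (Fin n) (Fin n) ℂ)
    · intro D hD
      exact Pdiag _ D le_rfl (hD.trans g.prop)
    · intro t
      rw [Matrix.TransvectionStruct.toMatrix]
      exact Ptrans t.i t.j t.hij t.c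
    · exact Pmul
  obtain ⟨γ, hγd, hγp, hγq⟩ := PM
  refine ⟨⟨γ, hγd⟩, ?_, ?_⟩
  · apply Subtype.ext
    exact hγp
  · apply Subtype.ext
    exact hγq
end

section
/- Let A be a commutative ℂ-algebra and let p, q : A → ℂ be two ℂ-algebra homomorphisms with distinct kernels. Let J be the standard symplectic matrix of size 2n and let Sp(2n, R) = { M ∈ Mat_{2n}(R) : M ⬝ J ⬝ Mᵀ = J } be the symplectic group over a commutative ring R. Then for every g ∈ Sp(2n, ℂ) there exists γ ∈ Sp(2n, A) such that applying p to each entry of γ yields the identity matrix and applying q to each entry of γ yields g. -/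
open Matrix

namespace SpGenAux

variable {n : ℕ}

/-! ### vecMulVec helper lemmas -/

lemma vecMulVec_mulVec (u w x : Fin n → ℂ) :
    (vecMulVec u w).mulVec x = (w ⬝ᵥ x) • u := by
  ext i
  simp only [vecMulVec, mulVec, dotProduct, Pi.smul_apply, smul_eq_mul, of_apply, Finset.sum_mul]
  refine Finset.sum_congr rfl fun j _ => by ring

lemma vecMulVec_transpose' (u w : Fin n → ℂ) : (vecMulVec u w)ᵀ = vecMulVec w u := by
  ext i j; simp [vecMulVec, mul_comm]

lemma vecMulVec_mul_vecMulVec (a b c d : Fin n → ℂ) :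
    vecMulVec a b * vecMulVec c d = (b ⬝ᵥ c) • vecMulVec a d := by
  ext x y
  simp only [vecMulVec, Matrix.mul_apply, of_apply, Matrix.smul_apply, smul_eq_mul, dotProduct,
    Finset.sum_mul]
  refine Finset.sum_congr rfl fun k _ => by ring

lemma vecMulVec_sub_left (a b c : Fin n → ℂ) :
    vecMulVec (a - b) c = vecMulVec a c - vecMulVec b c := by
  ext x y; simp [vecMulVec, sub_mul]

lemma vecMulVec_sub_right (a b c : Fin n → ℂ) :
    vecMulVec a (b - c) = vecMulVec a b - vecMulVec a c := by
  ext x y; simp [vecMulVec, mul_sub]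

lemma stdBasis_eq (i j : Fin n) (c : ℂ) :
    Matrix.single i j c = c • vecMulVec (Pi.single i 1) (Pi.single j 1) := by
  ext a b
  simp only [Matrix.single, vecMulVec, Matrix.smul_apply, of_apply, smul_eq_mul,
    Pi.single_apply]
  split_ifs <;> simp_all

lemma single_dot_single_same (i : Fin n) :
    (Pi.single i 1 : Fin n → ℂ) ⬝ᵥ Pi.single i 1 = 1 := by
  simp [dotProduct, Pi.single_apply]

lemma single_dot_single_ne {i j : Fin n} (h : i ≠ j) :
    (Pi.single i 1 : Fin n → ℂ) ⬝ᵥ Pi.single j 1 = 0 := by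
  simp [dotProduct, Pi.single_apply]
  intro h'
  exact absurd h'.symm h

/-! ### Transversality -/


/-- Transversality: for a "Lagrangian pair" (P, R) there is a symmetric B with P + B*R
invertible. -/
lemma transversal (P R : Matrix (Fin n) (Fin n) ℂ)
    (hsym : Pᵀ * R = Rᵀ * P)
    (hinj : ∀ v, P.mulVec v = 0 → R.mulVec v = 0 → v = 0) :
    ∃ B : Matrix (Fin n) (Fin n) ℂ, Bᵀ = B ∧ IsUnit (P + B * R).det := by
  suffices H : ∀ (k : ℕ) (P : Matrix (Fin n) (Fin n) ℂ),
      Module.finrank ℂ (LinearMap.ker P.mulVecLin) ≤ k →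
      Pᵀ * R = Rᵀ * P → (∀ v, P.mulVec v = 0 → R.mulVec v = 0 → v = 0) →
      ∃ B : Matrix (Fin n) (Fin n) ℂ, Bᵀ = B ∧ IsUnit (P + B * R).det from
    H _ P le_rfl hsym hinj
  intro k
  induction k with
  | zero =>
    intro P hk _ hinj
    refine ⟨0, by simp, ?_⟩
    have hker : LinearMap.ker P.mulVecLin = ⊥ := by
      rw [← Submodule.finrank_eq_zero (R := ℂ)]
      omega
    rw [isUnit_iff_ne_zero]
    simp only [Matrix.zero_mul, add_zero]
    intro hdet
    obtain ⟨v, hv0, hv⟩ := (Matrix.exists_mulVec_eq_zero_iff).2 hdet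
    have : v ∈ LinearMap.ker P.mulVecLin :=
      LinearMap.mem_ker.2 (by simpa [Matrix.mulVecLin_apply] using hv)
    rw [hker, Submodule.mem_bot] at this
    exact hv0 this
  | succ k ih =>
    intro P hk hsym hinj
    by_cases hker : LinearMap.ker P.mulVecLin = ⊥
    · -- same as base case
      refine ⟨0, by simp, ?_⟩
      rw [isUnit_iff_ne_zero]
      simp only [Matrix.zero_mul, add_zero]
      intro hdet
      obtain ⟨v, hv0, hv⟩ := (Matrix.exists_mulVec_eq_zero_iff).2 hdet
      have : v ∈ LinearMap.ker P.mulVecLin := LinearMap.mem_ker.2 (by simpa [Matrix.mulVecLin_apply] using hv)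
      rw [hker, Submodule.mem_bot] at this
      exact hv0 this
    · -- pick v in kernel
      obtain ⟨v, hvmem, hv0⟩ := Submodule.exists_mem_ne_zero_of_ne_bot hker
      have hPv : P.mulVec v = 0 := by simpa [Matrix.mulVecLin_apply] using hvmem
      have hRv : R.mulVec v ≠ 0 := fun h => hv0 (hinj v hPv h)
      -- pick coordinate where Rv is nonzero
      obtain ⟨i0, hi0⟩ : ∃ i, R.mulVec v i ≠ 0 := by
        by_contra h
        push_neg at h
        exact hRv (funext h)
      -- range of P is not everything
      have hrange : LinearMap.range P.mulVecLin ≠ ⊤ := by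
        intro htop
        have h1 := LinearMap.finrank_range_add_finrank_ker P.mulVecLin
        have h2 : Module.finrank ℂ (LinearMap.range P.mulVecLin) = n := by
          rw [htop]
          simpa using Submodule.finrank_top ℂ (Fin n → ℂ)
        have h3 : Module.finrank ℂ (Fin n → ℂ) = n := by simp
        have h4 : Module.finrank ℂ (LinearMap.ker P.mulVecLin) ≠ 0 := by
          rw [ne_eq, Submodule.finrank_eq_zero (R := ℂ)]
          exact hker
        omega
      obtain ⟨u1, hu1⟩ : ∃ u1, u1 ∉ LinearMap.range P.mulVecLin := by
        by_contra h
        push_neg at h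
        exact hrange (Submodule.eq_top_iff'.2 h)
      set u2 : Fin n → ℂ := Pi.single i0 1 with hu2def
      have hu2 : u2 ⬝ᵥ R.mulVec v ≠ 0 := by
        simpa [hu2def, dotProduct, Pi.single_apply] using hi0
      -- choose u not in range with u ⬝ᵥ Rv ≠ 0
      obtain ⟨u, hunr, hudot⟩ : ∃ u, u ∉ LinearMap.range P.mulVecLin ∧ u ⬝ᵥ R.mulVec v ≠ 0 := by
        by_cases h1 : u1 ⬝ᵥ R.mulVec v ≠ 0
        · exact ⟨u1, hu1, h1⟩
        push_neg at h1
        by_cases h2 : u2 ∈ LinearMap.range P.mulVecLin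
        · refine ⟨u1 + u2, ?_, ?_⟩
          · intro hmem
            exact hu1 (by simpa using Submodule.sub_mem _ hmem h2)
          · simpa [add_dotProduct, h1] using hu2
        · exact ⟨u2, h2, hu2⟩
      have hu0 : u ≠ 0 := fun h => hunr (h ▸ Submodule.zero_mem _)
      set P' : Matrix (Fin n) (Fin n) ℂ := P + vecMulVec u u * R with hP'def
      have hP'mulVec : ∀ x, P'.mulVec x = P.mulVec x + (u ⬝ᵥ R.mulVec x) • u := by
        intro x
        rw [hP'def, Matrix.add_mulVec, ← Matrix.mulVec_mulVec, vecMulVec_mulVec]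
      -- kernel of P' is strictly smaller than that of P
      have hker_le : LinearMap.ker P'.mulVecLin < LinearMap.ker P.mulVecLin := by
        constructor
        · intro x hx
          have hx' : P.mulVec x + (u ⬝ᵥ R.mulVec x) • u = 0 := by
            rw [← hP'mulVec]
            simpa [Matrix.mulVecLin_apply] using hx
          have hc : u ⬝ᵥ R.mulVec x = 0 := by
            by_contra hc
            apply hunr
            refine ⟨(-(u ⬝ᵥ R.mulVec x)⁻¹) • x, ?_⟩
            rw [Matrix.mulVecLin_apply, Matrix.mulVec_smul]
            have : P.mulVec x = -((u ⬝ᵥ R.mulVec x) • u) := by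
              rw [eq_neg_iff_add_eq_zero]; exact hx'
            rw [this]
            rw [smul_neg, smul_smul]
            rw [neg_mul, neg_smul, neg_neg, inv_mul_cancel₀ hc, one_smul]
          have hx'' := hx'
          rw [hc, zero_smul, add_zero] at hx''
          exact LinearMap.mem_ker.2 (by simpa [Matrix.mulVecLin_apply] using hx'')
        · intro hle
          have hvmem' : v ∈ LinearMap.ker P'.mulVecLin := hle (by
            simpa [LinearMap.mem_ker, Matrix.mulVecLin_apply] using hPv)
          have : P'.mulVec v = 0 := by simpa [Matrix.mulVecLin_apply] using hvmem'
          rw [hP'mulVec, hPv, zero_add] at this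
          exact hudot (by
            by_contra hne
            exact hu0 (by
              have := smul_eq_zero.1 this
              tauto))
      have hrank : Module.finrank ℂ (LinearMap.ker P'.mulVecLin) ≤ k := by
        have := Submodule.finrank_lt_finrank_of_lt hker_le
        omega
      have hsym' : P'ᵀ * R = Rᵀ * P' := by
        rw [hP'def, Matrix.transpose_add, Matrix.transpose_mul, vecMulVec_transpose',
          Matrix.add_mul, Matrix.mul_add, hsym]
        congr 1
        rw [← Matrix.mul_assoc]
      have hinj' : ∀ x, P'.mulVec x = 0 → R.mulVec x = 0 → x = 0 := by
        intro x hP'x hRx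
        apply hinj x _ hRx
        have := hP'mulVec x
        rw [hP'x, hRx] at this
        simpa using this.symm
      obtain ⟨B', hB'sym, hB'unit⟩ := ih P' hrank hsym' hinj'
      refine ⟨vecMulVec u u + B', ?_, ?_⟩
      · rw [Matrix.transpose_add, vecMulVec_transpose', hB'sym]
      · have : P + (vecMulVec u u + B') * R = P' + B' * R := by
          rw [hP'def, Matrix.add_mul]
          rw [add_assoc]
        rw [this]
        exact hB'unit

/-! ### Transvection factors -/

section Transvec
variable (i j : Fin n) (c : ℂ)

noncomputable def Wmat (i j : Fin n) : Matrix (Fin n) (Fin n) ℂ :=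
  1 - vecMulVec (Pi.single i 1 - Pi.single j 1) (Pi.single i 1 - Pi.single j 1)

noncomputable def S1mat (i j : Fin n) (c : ℂ) : Matrix (Fin n) (Fin n) ℂ :=
  Wmat i j + c • vecMulVec (Pi.single i 1) (Pi.single i 1)

lemma Wmat_transpose : (Wmat i j)ᵀ = Wmat i j := by
  rw [Wmat, Matrix.transpose_sub, Matrix.transpose_one, vecMulVec_transpose']

lemma S1mat_transpose : (S1mat i j c)ᵀ = S1mat i j c := by
  rw [S1mat, Matrix.transpose_add, Wmat_transpose, Matrix.transpose_smul, vecMulVec_transpose']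

lemma Wmat_mul_Wmat (hij : i ≠ j) : Wmat i j * Wmat i j = 1 := by
  have hw : (Pi.single i 1 - Pi.single j 1 : Fin n → ℂ) ⬝ᵥ (Pi.single i 1 - Pi.single j 1) = 2 := by
    rw [dotProduct_sub, sub_dotProduct, sub_dotProduct, single_dot_single_same,
      single_dot_single_same, single_dot_single_ne hij, single_dot_single_ne hij.symm]
    ring
  rw [Wmat]
  simp only [mul_sub, sub_mul, mul_one, one_mul, vecMulVec_mul_vecMulVec, hw, two_smul]
  abel

lemma vii_mul_Wmat (hij : i ≠ j) : vecMulVec (Pi.single i 1) (Pi.single i (1:ℂ)) * Wmat i j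
    = vecMulVec (Pi.single i 1) (Pi.single j 1) := by
  have hd : (Pi.single i 1 : Fin n → ℂ) ⬝ᵥ (Pi.single i 1 - Pi.single j 1) = 1 := by
    rw [dotProduct_sub, single_dot_single_same, single_dot_single_ne hij]; ring
  rw [Wmat, mul_sub, mul_one, vecMulVec_mul_vecMulVec, hd, one_smul, vecMulVec_sub_right]
  abel

lemma Wmat_mul_vjj (hij : i ≠ j) : Wmat i j * vecMulVec (Pi.single j 1) (Pi.single j (1:ℂ))
    = vecMulVec (Pi.single i 1) (Pi.single j 1) := by
  have hd : (Pi.single i 1 - Pi.single j 1 : Fin n → ℂ) ⬝ᵥ Pi.single j 1 = -1 := by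
    rw [sub_dotProduct, single_dot_single_same, single_dot_single_ne hij]; ring
  rw [Wmat, sub_mul, one_mul, vecMulVec_mul_vecMulVec, hd, neg_one_smul, vecMulVec_sub_left]
  abel

lemma S1mat_mul_Wmat (hij : i ≠ j) : S1mat i j c * Wmat i j = 1 + Matrix.single i j c := by
  rw [S1mat, add_mul, Wmat_mul_Wmat i j hij, smul_mul_assoc, vii_mul_Wmat i j hij, stdBasis_eq]

lemma S1mat_right_inv (hij : i ≠ j) :
    S1mat i j c * (Wmat i j - c • vecMulVec (Pi.single j 1) (Pi.single j 1)) = 1 := by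
  have hvv : vecMulVec (Pi.single i 1) (Pi.single i (1:ℂ)) *
      vecMulVec (Pi.single j 1) (Pi.single j (1:ℂ)) = 0 := by
    rw [vecMulVec_mul_vecMulVec, single_dot_single_ne hij, zero_smul]
  rw [S1mat, add_mul, mul_sub, mul_sub, Wmat_mul_Wmat i j hij]
  simp only [smul_mul_assoc, mul_smul_comm]
  rw [Wmat_mul_vjj i j hij, vii_mul_Wmat i j hij, hvv, smul_zero, smul_zero]
  abel

end Transvec

/-! ### Block unipotent generators -/

section Gen
variable {R : Type*} [CommRing R]

/-- Upper block unipotent. -/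
def UB (B : Matrix (Fin n) (Fin n) R) : Matrix (Fin n ⊕ Fin n) (Fin n ⊕ Fin n) R :=
  fromBlocks 1 B 0 1

/-- Lower block unipotent. -/
def LB (C : Matrix (Fin n) (Fin n) R) : Matrix (Fin n ⊕ Fin n) (Fin n ⊕ Fin n) R :=
  fromBlocks 1 0 C 1

lemma UB_mem {B : Matrix (Fin n) (Fin n) R} (hB : Bᵀ = B) :
    UB B ∈ Matrix.symplecticGroup (Fin n) R := by
  rw [SymplecticGroup.mem_iff, UB, Matrix.J, fromBlocks_transpose, fromBlocks_multiply,
    fromBlocks_multiply]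
  simp [hB]

lemma LB_mem {C : Matrix (Fin n) (Fin n) R} (hC : Cᵀ = C) :
    LB C ∈ Matrix.symplecticGroup (Fin n) R := by
  rw [SymplecticGroup.mem_iff, LB, Matrix.J, fromBlocks_transpose, fromBlocks_multiply,
    fromBlocks_multiply]
  simp [hC]

lemma UB_map {S : Type*} [CommRing S] (f : R →+* S) (B : Matrix (Fin n) (Fin n) R) :
    (UB B).map f = UB (B.map f) := by
  rw [UB, UB, fromBlocks_map]
  congr 1 <;> ext i j <;> simp [Matrix.one_apply, apply_ite f]

lemma LB_map {S : Type*} [CommRing S] (f : R →+* S) (C : Matrix (Fin n) (Fin n) R) :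
    (LB C).map f = LB (C.map f) := by
  rw [LB, LB, fromBlocks_map]
  congr 1 <;> ext i j <;> simp [Matrix.one_apply, apply_ite f]

lemma UB_mul_UB (B B' : Matrix (Fin n) (Fin n) R) : UB B * UB B' = UB (B + B') := by
  rw [UB, UB, UB, fromBlocks_multiply]
  simp [add_comm]

lemma LB_mul_LB (C C' : Matrix (Fin n) (Fin n) R) : LB C * LB C' = LB (C + C') := by
  rw [LB, LB, LB, fromBlocks_multiply]
  simp [add_comm]

lemma UB_zero : (UB 0 : Matrix (Fin n ⊕ Fin n) (Fin n ⊕ Fin n) R) = 1 := by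
  rw [UB, ← fromBlocks_one]

lemma LB_zero : (LB 0 : Matrix (Fin n ⊕ Fin n) (Fin n ⊕ Fin n) R) = 1 := by
  rw [LB, ← fromBlocks_one]

end Gen

lemma symm_block_decomp (E : Matrix (Fin n) (Fin n) ℂ) (hdet : IsUnit E.det) :
    UB E * LB (-E⁻¹) * UB E * (UB (-1) * LB 1 * UB (-1)) = fromBlocks E 0 0 E⁻¹ := by
  have h1 : E * E⁻¹ = 1 := Matrix.mul_nonsing_inv E hdet
  have h2 : E⁻¹ * E = 1 := Matrix.nonsing_inv_mul E hdet
  simp only [UB, LB, fromBlocks_multiply]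
  simp [h1, h2, Matrix.mul_neg, Matrix.neg_mul]

lemma diagblock_mul (M N : Matrix (Fin n) (Fin n) ℂ) :
    fromBlocks M 0 0 (M⁻¹)ᵀ * fromBlocks N 0 0 (N⁻¹)ᵀ
      = fromBlocks (M * N) 0 0 (((M * N)⁻¹)ᵀ) := by
  rw [fromBlocks_multiply]
  simp [Matrix.mul_inv_rev, Matrix.transpose_mul]

/-! ### Generation of the symplectic group -/

theorem sp_induction (P : Matrix (Fin n ⊕ Fin n) (Fin n ⊕ Fin n) ℂ → Prop)
    (hU : ∀ B : Matrix (Fin n) (Fin n) ℂ, Bᵀ = B → P (UB B))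
    (hL : ∀ C : Matrix (Fin n) (Fin n) ℂ, Cᵀ = C → P (LB C))
    (hmul : ∀ M N, P M → P N → P (M * N))
    (g : Matrix (Fin n ⊕ Fin n) (Fin n ⊕ Fin n) ℂ)
    (hg : g ∈ Matrix.symplecticGroup (Fin n) ℂ) : P g := by
  have hsymm : ∀ E : Matrix (Fin n) (Fin n) ℂ, Eᵀ = E → IsUnit E.det →
      P (fromBlocks E 0 0 E⁻¹) := by
    intro E hE hdet
    rw [← symm_block_decomp E hdet]
    have hEinv : (-E⁻¹)ᵀ = -E⁻¹ := by
      rw [Matrix.transpose_neg, Matrix.transpose_nonsing_inv, hE]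
    refine hmul _ _ (hmul _ _ (hmul _ _ (hU E hE) (hL _ hEinv)) (hU E hE)) ?_
    refine hmul _ _ (hmul _ _ (hU (-1) (by simp)) (hL 1 (by simp))) (hU (-1) (by simp))
  have hQsymm : ∀ E : Matrix (Fin n) (Fin n) ℂ, Eᵀ = E → IsUnit E.det →
      P (fromBlocks E 0 0 (E⁻¹)ᵀ) := by
    intro E hE hdet
    rw [Matrix.transpose_nonsing_inv, hE]
    exact hsymm E hE hdet
  have hdiagblock : ∀ M : Matrix (Fin n) (Fin n) ℂ, IsUnit M.det →
      P (fromBlocks M 0 0 (M⁻¹)ᵀ) := by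
    intro M hdet
    refine Matrix.diagonal_transvection_induction_of_det_ne_zero
      (fun N => P (fromBlocks N 0 0 (N⁻¹)ᵀ)) M hdet.ne_zero ?_ ?_ ?_
    · intro D hD
      exact hQsymm _ (Matrix.diagonal_transpose D) (isUnit_iff_ne_zero.2 hD)
    · rintro ⟨i, j, hij, c⟩
      rw [Matrix.TransvectionStruct.toMatrix_mk, Matrix.transvection,
        ← S1mat_mul_Wmat i j c hij, ← diagblock_mul]
      have hS1det : IsUnit (S1mat i j c).det :=
        Matrix.isUnit_det_of_right_inverse (S1mat_right_inv i j c hij)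
      have hWdet : IsUnit (Wmat i j).det :=
        Matrix.isUnit_det_of_right_inverse (Wmat_mul_Wmat i j hij)
      exact hmul _ _ (hQsymm _ (S1mat_transpose i j c) hS1det)
        (hQsymm _ (Wmat_transpose i j) hWdet)
    · intro A B' _ _ hA hB'
      rw [← diagblock_mul]
      exact hmul _ _ hA hB'
  -- main decomposition
  have hgb : g = fromBlocks g.toBlocks₁₁ g.toBlocks₁₂ g.toBlocks₂₁ g.toBlocks₂₂ :=
    (fromBlocks_toBlocks g).symm
  set Pm := g.toBlocks₁₁ with hPmdef
  set Qm := g.toBlocks₁₂ with hQmdef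
  set Rm := g.toBlocks₂₁ with hRmdef
  set Sm := g.toBlocks₂₂ with hSmdef
  have hg' := (SymplecticGroup.mem_iff').1 hg
  rw [hgb, Matrix.J, fromBlocks_transpose] at hg'
  rw [fromBlocks_multiply, fromBlocks_multiply] at hg'
  have h11 : Pmᵀ * Rm = Rmᵀ * Pm := by
    have h := congrArg Matrix.toBlocks₁₁ hg'
    simp only [Matrix.toBlocks_fromBlocks₁₁, Matrix.mul_zero, Matrix.mul_one, zero_add,
      add_zero, Matrix.mul_neg, Matrix.neg_mul] at h
    rw [add_neg_eq_zero] at h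
    exact h.symm
  -- injectivity of the pair (Pm, Rm)
  have hdetg : IsUnit g.det := SymplecticGroup.symplectic_det hg
  have hinj : ∀ v, Pm.mulVec v = 0 → Rm.mulVec v = 0 → v = 0 := by
    intro v hPv hRv
    by_contra hv0
    have hx0 : (Sum.elim v 0 : Fin n ⊕ Fin n → ℂ) ≠ 0 := by
      intro h
      exact hv0 (funext fun i => congrFun h (Sum.inl i))
    have hmv : g.mulVec (Sum.elim v 0) = 0 := by
      rw [hgb, fromBlocks_mulVec]
      simp [hPv, hRv]
    have hdet0 : g.det = 0 := Matrix.exists_mulVec_eq_zero_iff.1 ⟨_, hx0, hmv⟩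
    exact hdetg.ne_zero hdet0
  obtain ⟨B, hBsym, hMdet⟩ := transversal Pm Rm h11 hinj
  set M := Pm + B * Rm with hMdef
  have hMinv : M * M⁻¹ = 1 := Matrix.mul_nonsing_inv M hMdet
  have hMinv' : M⁻¹ * M = 1 := Matrix.nonsing_inv_mul M hMdet
  have hMR : Mᵀ * Rm = Rmᵀ * M := by
    rw [hMdef, Matrix.transpose_add, Matrix.transpose_mul, hBsym, Matrix.add_mul, Matrix.mul_add,
      h11, Matrix.mul_assoc]
  have hRMinv : Rm * M⁻¹ = (M⁻¹)ᵀ * Rmᵀ := by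
    calc Rm * M⁻¹ = (M⁻¹)ᵀ * Mᵀ * (Rm * M⁻¹) := by
          rw [← Matrix.transpose_mul, hMinv, Matrix.transpose_one, Matrix.one_mul]
      _ = (M⁻¹)ᵀ * (Mᵀ * Rm) * M⁻¹ := by
          rw [Matrix.mul_assoc, Matrix.mul_assoc, Matrix.mul_assoc]
      _ = (M⁻¹)ᵀ * Rmᵀ * (M * M⁻¹) := by
          rw [hMR, Matrix.mul_assoc, Matrix.mul_assoc, Matrix.mul_assoc]
      _ = (M⁻¹)ᵀ * Rmᵀ := by rw [hMinv, Matrix.mul_one]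
  set Cm := -(Rm * M⁻¹) with hCmdef
  have hCmsym : Cmᵀ = Cm := by
    rw [hCmdef, Matrix.transpose_neg, Matrix.transpose_mul, Matrix.transpose_nonsing_inv,
      ← Matrix.transpose_nonsing_inv, ← hRMinv]
  set Nm := Qm + B * Sm with hNmdef
  set h := LB Cm * (UB B * g) with hhdef
  have hCmM : Cm * (Pm + B * Rm) + Rm = 0 := by
    rw [← hMdef, hCmdef, Matrix.neg_mul, Matrix.mul_assoc, hMinv', Matrix.mul_one,
      neg_add_cancel]
  have hhblocks : h = fromBlocks M Nm 0 (Cm * Nm + Sm) := by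
    rw [hhdef, hgb, UB, LB, fromBlocks_multiply, fromBlocks_multiply, fromBlocks_inj]
    refine ⟨by simp [hMdef], by simp [hNmdef], ?_, ?_⟩
    · simpa using hCmM
    · simp [hNmdef, Matrix.mul_add, Matrix.add_mul, add_assoc]
  set S' := Cm * Nm + Sm with hS'def
  have hhmem : h ∈ Matrix.symplecticGroup (Fin n) ℂ :=
    mul_mem (LB_mem hCmsym) (mul_mem (UB_mem hBsym) hg)
  have hid := (SymplecticGroup.mem_iff).1 hhmem
  rw [hhblocks, Matrix.J, fromBlocks_transpose, fromBlocks_multiply, fromBlocks_multiply] at hid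
  have h12 : M * S'ᵀ = 1 := by
    have hb := congrArg Matrix.toBlocks₁₂ hid
    simp only [Matrix.toBlocks_fromBlocks₁₂, Matrix.mul_zero, Matrix.mul_one, zero_add,
      add_zero, Matrix.mul_neg, Matrix.neg_mul, Matrix.transpose_zero] at hb
    rw [← neg_eq_iff_eq_neg] at hb
    rw [← hb, neg_neg]
  have hNM : Nm * Mᵀ = M * Nmᵀ := by
    have hb := congrArg Matrix.toBlocks₁₁ hid
    simp only [Matrix.toBlocks_fromBlocks₁₁, Matrix.mul_zero, Matrix.mul_one, zero_add,
      add_zero, Matrix.mul_neg, Matrix.neg_mul] at hb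
    rw [add_neg_eq_zero] at hb
    exact hb
  have hS' : S' = (M⁻¹)ᵀ := by
    have hMi : M⁻¹ = S'ᵀ := Matrix.inv_eq_right_inv h12
    rw [hMi, Matrix.transpose_transpose]
  have hMNsym : (M⁻¹ * Nm)ᵀ = M⁻¹ * Nm := by
    calc (M⁻¹ * Nm)ᵀ = Nmᵀ * (M⁻¹)ᵀ := Matrix.transpose_mul _ _
      _ = (M⁻¹ * M) * (Nmᵀ * (M⁻¹)ᵀ) := by rw [hMinv', Matrix.one_mul]
      _ = M⁻¹ * (M * Nmᵀ) * (M⁻¹)ᵀ := by simp only [Matrix.mul_assoc]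
      _ = M⁻¹ * (Nm * Mᵀ) * (M⁻¹)ᵀ := by rw [hNM]
      _ = M⁻¹ * Nm * (Mᵀ * (M⁻¹)ᵀ) := by simp only [Matrix.mul_assoc]
      _ = M⁻¹ * Nm * (M⁻¹ * M)ᵀ := by rw [Matrix.transpose_mul]
      _ = M⁻¹ * Nm := by rw [hMinv', Matrix.transpose_one, Matrix.mul_one]
  have hhdecomp : h = fromBlocks M 0 0 (M⁻¹)ᵀ * UB (M⁻¹ * Nm) := by
    rw [UB, fromBlocks_multiply, hhblocks, hS']
    rw [← Matrix.mul_assoc, hMinv, Matrix.one_mul]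
    simp
  have hPh : P h := by
    rw [hhdecomp]
    exact hmul _ _ (hdiagblock M hMdet) (hU _ hMNsym)
  have hgfin : g = UB (-B) * (LB (-Cm) * h) := by
    rw [hhdef, ← Matrix.mul_assoc (LB (-Cm)), LB_mul_LB, neg_add_cancel, LB_zero,
      Matrix.one_mul, ← Matrix.mul_assoc, UB_mul_UB, neg_add_cancel, UB_zero, Matrix.one_mul]
  rw [hgfin]
  refine hmul _ _ (hU _ ?_) (hmul _ _ (hL _ ?_) hPh)
  · rw [Matrix.transpose_neg, hBsym]
  · rw [Matrix.transpose_neg, hCmsym]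

end SpGenAux


/-- Lemma 3.1 of the paper, for `G = Sp(2n)`: if `A` is a commutative `ℂ`-algebra and
`p, q : A →ₐ[ℂ] ℂ` are `ℂ`-algebra homomorphisms with distinct kernels, then for every
symplectic matrix `g ∈ Sp(2n, ℂ)` there is a symplectic matrix `γ ∈ Sp(2n, A)` whose
entrywise image under `p` is the identity and whose entrywise image under `q` is `g`. -/
theorem stmt1 (A : Type*) [CommRing A] [Algebra ℂ A] (p q : A →ₐ[ℂ] ℂ)
    (hpq : RingHom.ker (p : A →+* ℂ) ≠ RingHom.ker (q : A →+* ℂ))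
    (n : ℕ) (g : Matrix (Fin n ⊕ Fin n) (Fin n ⊕ Fin n) ℂ)
    (hg : g ∈ Matrix.symplecticGroup (Fin n) ℂ) :
    ∃ γ : Matrix (Fin n ⊕ Fin n) (Fin n ⊕ Fin n) A,
      γ ∈ Matrix.symplecticGroup (Fin n) A ∧
      γ.map p = (1 : Matrix (Fin n ⊕ Fin n) (Fin n ⊕ Fin n) ℂ) ∧
      γ.map q = g := by
  classical
  -- find `a : A` with `p a = 0` and `q a = 1`
  obtain ⟨a, hpa, hqa⟩ : ∃ a : A, p a = 0 ∧ q a = 1 := by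
    have hps : Function.Surjective (p : A →+* ℂ) := fun c => ⟨algebraMap ℂ A c, p.commutes c⟩
    have hqs : Function.Surjective (q : A →+* ℂ) := fun c => ⟨algebraMap ℂ A c, q.commutes c⟩
    have hpm : (RingHom.ker (p : A →+* ℂ)).IsMaximal :=
      RingHom.ker_isMaximal_of_surjective _ hps
    have hqm : (RingHom.ker (q : A →+* ℂ)).IsMaximal :=
      RingHom.ker_isMaximal_of_surjective _ hqs
    have hnle : ¬ RingHom.ker (p : A →+* ℂ) ≤ RingHom.ker (q : A →+* ℂ) := by
      intro hle
      exact hpq (hpm.eq_of_le hqm.ne_top hle)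
    obtain ⟨x, hxp, hxq⟩ := SetLike.not_le_iff_exists.1 hnle
    have hpx : p x = 0 := by rwa [← RingHom.mem_ker]
    have hqx : q x ≠ 0 := fun h => hxq (by rwa [RingHom.mem_ker])
    refine ⟨(q x)⁻¹ • x, ?_, ?_⟩
    · rw [_root_.map_smul, hpx, smul_zero]
    · rw [_root_.map_smul, smul_eq_mul, inv_mul_cancel₀ hqx]
  -- the interpolation predicate
  let Pred : Matrix (Fin n ⊕ Fin n) (Fin n ⊕ Fin n) ℂ → Prop := fun m =>
    ∃ γ : Matrix (Fin n ⊕ Fin n) (Fin n ⊕ Fin n) A,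
      γ ∈ Matrix.symplecticGroup (Fin n) A ∧
      γ.map p = (1 : Matrix (Fin n ⊕ Fin n) (Fin n ⊕ Fin n) ℂ) ∧ γ.map q = m
  have lift : ∀ B : Matrix (Fin n) (Fin n) ℂ, Bᵀ = B →
      ∃ B' : Matrix (Fin n) (Fin n) A, B'ᵀ = B' ∧ B'.map p = 0 ∧ B'.map q = B := by
    intro B hB
    refine ⟨a • B.map (algebraMap ℂ A), ?_, ?_, ?_⟩
    · rw [Matrix.transpose_smul, ← Matrix.transpose_map, hB]
    · ext i j
      simp [Matrix.map_apply, Matrix.smul_apply, smul_eq_mul, _root_.map_mul, hpa,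
        AlgHom.commutes]
    · ext i j
      simp [Matrix.map_apply, Matrix.smul_apply, smul_eq_mul, _root_.map_mul, hqa,
        AlgHom.commutes]
  have hUcase : ∀ B : Matrix (Fin n) (Fin n) ℂ, Bᵀ = B → Pred (SpGenAux.UB B) := by
    intro B hB
    obtain ⟨B', hB'sym, hB'p, hB'q⟩ := lift B hB
    refine ⟨SpGenAux.UB B', SpGenAux.UB_mem hB'sym, ?_, ?_⟩
    · rw [show (SpGenAux.UB B').map p = (SpGenAux.UB B').map (p : A →+* ℂ) from rfl,
        SpGenAux.UB_map, show (B'.map (p : A →+* ℂ)) = B'.map p from rfl, hB'p, SpGenAux.UB_zero]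
    · rw [show (SpGenAux.UB B').map q = (SpGenAux.UB B').map (q : A →+* ℂ) from rfl,
        SpGenAux.UB_map, show (B'.map (q : A →+* ℂ)) = B'.map q from rfl, hB'q]
  have hLcase : ∀ C : Matrix (Fin n) (Fin n) ℂ, Cᵀ = C → Pred (SpGenAux.LB C) := by
    intro C hC
    obtain ⟨C', hC'sym, hC'p, hC'q⟩ := lift C hC
    refine ⟨SpGenAux.LB C', SpGenAux.LB_mem hC'sym, ?_, ?_⟩
    · rw [show (SpGenAux.LB C').map p = (SpGenAux.LB C').map (p : A →+* ℂ) from rfl,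
        SpGenAux.LB_map, show (C'.map (p : A →+* ℂ)) = C'.map p from rfl, hC'p, SpGenAux.LB_zero]
    · rw [show (SpGenAux.LB C').map q = (SpGenAux.LB C').map (q : A →+* ℂ) from rfl,
        SpGenAux.LB_map, show (C'.map (q : A →+* ℂ)) = C'.map q from rfl, hC'q]
  have hmulcase : ∀ M N, Pred M → Pred N → Pred (M * N) := by
    rintro M N ⟨γ₁, hγ₁, hγ₁p, hγ₁q⟩ ⟨γ₂, hγ₂, hγ₂p, hγ₂q⟩
    refine ⟨γ₁ * γ₂, mul_mem hγ₁ hγ₂, ?_, ?_⟩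
    · rw [show (γ₁ * γ₂).map p = (γ₁ * γ₂).map (p : A →+* ℂ) from rfl, Matrix.map_mul]
      rw [show γ₁.map (p : A →+* ℂ) = γ₁.map p from rfl, show γ₂.map (p : A →+* ℂ) = γ₂.map p from
        rfl, hγ₁p, hγ₂p, Matrix.one_mul]
    · rw [show (γ₁ * γ₂).map q = (γ₁ * γ₂).map (q : A →+* ℂ) from rfl, Matrix.map_mul]
      rw [show γ₁.map (q : A →+* ℂ) = γ₁.map q from rfl, show γ₂.map (q : A →+* ℂ) = γ₂.map q from
        rfl, hγ₁q, hγ₂q]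
  exact SpGenAux.sp_induction Pred hUcase hLcase hmulcase g hg
end

section
/- Let A be a commutative ring and let m₁, m₂ be two distinct maximal ideals of A. Then for every n ≥ 1 the group homomorphism SL_n(A) → SL_n(A/m₁) × SL_n(A/m₂), induced by applying the two quotient maps entrywise, is surjective. -/
open Matrix

section Aux

variable {ι : Type*} [DecidableEq ι] [Fintype ι]

private lemma diag_update_eq' {k : Type*} [Field k] (i j : ι) (hij : i ≠ j) (u : k) :
    Matrix.diagonal (Function.update (Function.update (1 : ι → k) i u) j u⁻¹) =
      1 + Matrix.single i i (u - 1) + Matrix.single j j (u⁻¹ - 1) := by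
  ext a b
  rcases eq_or_ne a b with rfl | hab
  · rcases eq_or_ne a i with rfl | hai
    · have h2 : ¬(j = a ∧ j = a) := fun h => hij h.1.symm
      simp [Function.update_apply, hij, hij.symm, Matrix.single_apply_of_ne j j _ a a h2]
    · rcases eq_or_ne a j with rfl | haj
      · have h1 : ¬(i = a ∧ i = a) := fun h => hai h.1.symm
        simp [Function.update_apply, Matrix.single_apply_of_ne i i _ a a h1]
      · have h1 : ¬(i = a ∧ i = a) := fun h => hai h.1.symm
        have h2 : ¬(j = a ∧ j = a) := fun h => haj h.1.symm
        simp [Function.update_apply, hai, haj, Matrix.single_apply_of_ne i i _ a a h1,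
          Matrix.single_apply_of_ne j j _ a a h2]
  · have h1 : ¬(i = a ∧ i = b) := fun h => hab (h.1.symm.trans h.2)
    have h2 : ¬(j = a ∧ j = b) := fun h => hab (h.1.symm.trans h.2)
    simp [Matrix.diagonal_apply_ne _ hab, Matrix.one_apply_ne hab,
      Matrix.single_apply_of_ne i i _ a b h1, Matrix.single_apply_of_ne j j _ a b h2]

private lemma transvection_prod_eq' {k : Type*} [Field k] (i j : ι) (hij : i ≠ j) (u : k)
    (hu : u ≠ 0) :
    Matrix.transvection j i (u⁻¹ - 1) * Matrix.transvection i j 1 *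
      Matrix.transvection j i (u - 1) * Matrix.transvection i j (-u⁻¹) =
      Matrix.diagonal (Function.update (Function.update (1 : ι → k) i u) j u⁻¹) := by
  have e1 : Matrix.transvection j i (u⁻¹ - 1) * Matrix.transvection i j 1 *
      Matrix.transvection j i (u - 1) =
      1 + Matrix.single i j 1 + Matrix.single i i (u - 1) +
        (Matrix.single j i (u⁻¹-1) + Matrix.single j i (u-1) +
          Matrix.single j i ((u⁻¹-1) * 1 * (u-1))) + Matrix.single j j (u⁻¹-1) := by
    simp only [transvection, add_mul, mul_add, one_mul, mul_one,
      Matrix.single_mul_single_same, Matrix.single_mul_single_of_ne, hij, hij.symm,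
      ne_eq, not_false_eq_true, add_zero, zero_add]
    abel
  rw [← Matrix.single_add, ← Matrix.single_add,
    show (u⁻¹-1) + (u-1) + (u⁻¹-1) * 1 * (u-1) = 0 by field_simp; ring,
    Matrix.single_zero, add_zero] at e1
  have e2 : Matrix.transvection j i (u⁻¹ - 1) * Matrix.transvection i j 1 *
      Matrix.transvection j i (u - 1) * Matrix.transvection i j (-u⁻¹) =
      1 + (Matrix.single i j 1 + Matrix.single i j (-u⁻¹) +
        Matrix.single i j ((u-1) * -u⁻¹)) + Matrix.single i i (u - 1) +
        Matrix.single j j (u⁻¹-1) := by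
    rw [e1]
    simp only [transvection, add_mul, mul_add, one_mul, mul_one,
      Matrix.single_mul_single_same, Matrix.single_mul_single_of_ne, hij, hij.symm,
      ne_eq, not_false_eq_true, add_zero, zero_add]
    abel
  rw [← Matrix.single_add, ← Matrix.single_add,
    show (1:k) + -u⁻¹ + (u-1) * -u⁻¹ = 0 by field_simp; ring,
    Matrix.single_zero, add_zero] at e2
  rw [e2, diag_update_eq' i j hij u]

private lemma gen_diag' {k : Type*} [Field k] (P : Matrix ι ι k → Prop) (h1 : P 1)
    (htv : ∀ (i j : ι), i ≠ j → ∀ c : k, P (Matrix.transvection i j c))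
    (hmul : ∀ M N, P M → P N → P (M * N)) :
    ∀ D : ι → k, ∏ x, D x = 1 → P (Matrix.diagonal D) := by
  classical
  have key : ∀ (m : ℕ) (D : ι → k),
      (Finset.univ.filter (fun x => D x ≠ 1)).card ≤ m → ∏ x, D x = 1 →
      P (Matrix.diagonal D) := by
    intro m
    induction m with
    | zero =>
      intro D hcard _
      have hone : ∀ x, D x = (1 : k) := by
        intro x
        by_contra hx
        have hmem : x ∈ Finset.univ.filter (fun x => D x ≠ 1) := by simp [hx]
        have := Finset.card_pos.mpr ⟨x, hmem⟩
        omega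
      rw [show D = 1 from funext fun x => hone x,
        show (Matrix.diagonal (1 : ι → k)) = 1 from Matrix.diagonal_one]
      exact h1
    | succ m ih =>
      intro D hcard hD
      by_cases hone : ∀ x, D x = 1
      · rw [show D = 1 from funext hone,
          show (Matrix.diagonal (1 : ι → k)) = 1 from Matrix.diagonal_one]
        exact h1
      · push_neg at hone
        obtain ⟨i, hi⟩ := hone
        have hne0 : ∀ x, D x ≠ 0 := fun x hx =>
          one_ne_zero (hD ▸ Finset.prod_eq_zero (Finset.mem_univ x) hx)
        have hij : ∃ j, j ≠ i ∧ D j ≠ 1 := by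
          by_contra h
          push_neg at h
          apply hi
          have : ∏ x, D x = D i := by
            rw [← Finset.mul_prod_erase Finset.univ D (Finset.mem_univ i)]
            rw [Finset.prod_eq_one fun x hx => h x (Finset.mem_erase.mp hx).1, mul_one]
          rw [← hD, this]
        obtain ⟨j, hji, hj⟩ := hij
        set u := D i with hu
        set D' := Function.update (Function.update D i 1) j (D j * D i) with hD'
        have hmemi : i ∈ Finset.univ \ {j} := by
          simp [Finset.mem_sdiff, Ne.symm hji]
        have hsplit : ((∏ x ∈ (Finset.univ \ {j}) \ {i}, D x) * D i) * D j = 1 := by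
          rw [← Finset.prod_eq_prod_diff_singleton_mul hmemi D,
            ← Finset.prod_eq_prod_diff_singleton_mul (Finset.mem_univ j) D]
          exact hD
        have hprod' : ∏ x, D' x = 1 := by
          rw [hD', Finset.prod_update_of_mem (Finset.mem_univ j),
            Finset.prod_update_of_mem hmemi]
          linear_combination hsplit
        have hsub : (Finset.univ.filter (fun x => D' x ≠ 1)) ⊆
            (Finset.univ.filter (fun x => D x ≠ 1)).erase i := by
          intro x hx
          simp only [Finset.mem_filter, Finset.mem_univ, true_and, ne_eq] at hx
          have hxi : x ≠ i := by
            rintro rfl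
            apply hx
            rw [hD', Function.update_apply, if_neg (Ne.symm hji), Function.update_self]
          refine Finset.mem_erase.mpr ⟨hxi, ?_⟩
          simp only [Finset.mem_filter, Finset.mem_univ, true_and, ne_eq]
          rcases eq_or_ne x j with rfl | hxj
          · exact hj
          · intro hDx
            apply hx
            rw [hD', Function.update_apply, if_neg hxj, Function.update_apply, if_neg hxi, hDx]
        have hcard' : (Finset.univ.filter (fun x => D' x ≠ 1)).card ≤ m := by
          have h1' : i ∈ Finset.univ.filter (fun x => D x ≠ 1) := by
            simp only [Finset.mem_filter, Finset.mem_univ, true_and]; exact hi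
          have := Finset.card_le_card hsub
          rw [Finset.card_erase_of_mem h1'] at this
          omega
        have hP' : P (Matrix.diagonal D') := ih D' hcard' hprod'
        have hPH : P (Matrix.diagonal (Function.update (Function.update (1 : ι → k) i u) j u⁻¹)) := by
          rw [← transvection_prod_eq' i j (Ne.symm hji) u (hne0 i)]
          exact hmul _ _ (hmul _ _ (hmul _ _ (htv j i hji _) (htv i j (Ne.symm hji) _))
            (htv j i hji _)) (htv i j (Ne.symm hji) _)
        have hcomb : Matrix.diagonal D' *
            Matrix.diagonal (Function.update (Function.update (1 : ι → k) i u) j u⁻¹) =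
            Matrix.diagonal D := by
          rw [Matrix.diagonal_mul_diagonal]
          refine congrArg Matrix.diagonal (funext fun x => ?_)
          rcases eq_or_ne x j with rfl | hxj
          · rw [hD']
            simp only [Function.update_self]
            rw [hu, mul_inv_cancel_right₀ (hne0 i)]
          · rcases eq_or_ne x i with rfl | hxi
            · rw [hD']
              simp [Function.update_apply, hxj, Ne.symm hji, hu]
            · rw [hD']
              simp [Function.update_apply, hxj, hxi]
        rw [← hcomb]
        exact hmul _ _ hP' hPH
  exact fun D hD => key _ D le_rfl hD

private lemma gen_sl' {k : Type*} [Field k] (P : Matrix ι ι k → Prop) (h1 : P 1)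
    (htv : ∀ (i j : ι), i ≠ j → ∀ c : k, P (Matrix.transvection i j c))
    (hmul : ∀ M N, P M → P N → P (M * N)) (M : Matrix ι ι k) (hdet : M.det = 1) : P M := by
  apply Matrix.diagonal_transvection_induction P M
  · intro D hD
    rw [hdet, Matrix.det_diagonal] at hD
    exact gen_diag' P h1 htv hmul D hD
  · rintro ⟨i, j, hij, c⟩
    rw [Matrix.TransvectionStruct.toMatrix_mk]
    exact htv i j hij c
  · exact hmul

private lemma map_transvection' {R S : Type*} [CommRing R] [CommRing S] (f : R →+* S)
    (i j : ι) (c : R) :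
    (Matrix.transvection i j c).map f = Matrix.transvection i j (f c) := by
  ext a b
  simp [Matrix.transvection, Matrix.map_apply, Matrix.add_apply, Matrix.one_apply,
    Matrix.single, apply_ite f]

end Aux

private lemma crt_pair {A : Type*} [CommRing A] {m₁ m₂ : Ideal A} (h : m₁ ⊔ m₂ = ⊤)
    (x : A ⧸ m₁) (y : A ⧸ m₂) :
    ∃ a : A, Ideal.Quotient.mk m₁ a = x ∧ Ideal.Quotient.mk m₂ a = y := by
  obtain ⟨x', rfl⟩ := Ideal.Quotient.mk_surjective x
  obtain ⟨y', rfl⟩ := Ideal.Quotient.mk_surjective y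
  have h1 : (1 : A) ∈ m₁ ⊔ m₂ := h ▸ Submodule.mem_top
  obtain ⟨u, hu, v, hv, huv⟩ := Submodule.mem_sup.mp h1
  refine ⟨x' * v + y' * u, ?_, ?_⟩
  · have hv1 : Ideal.Quotient.mk m₁ v = 1 := by
      rw [show v = 1 - u by rw [← huv]; ring, _root_.map_sub, _root_.map_one,
        Ideal.Quotient.eq_zero_iff_mem.mpr hu, sub_zero]
    rw [_root_.map_add, _root_.map_mul, _root_.map_mul, hv1, Ideal.Quotient.eq_zero_iff_mem.mpr hu,
      mul_one, mul_zero, add_zero]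
  · have hu1 : Ideal.Quotient.mk m₂ u = 1 := by
      rw [show u = 1 - v by rw [← huv]; ring, _root_.map_sub, _root_.map_one,
        Ideal.Quotient.eq_zero_iff_mem.mpr hv, sub_zero]
    rw [_root_.map_add, _root_.map_mul, _root_.map_mul, hu1, Ideal.Quotient.eq_zero_iff_mem.mpr hv,
      mul_one, mul_zero, zero_add]

/-- Two-point surjectivity for `SL_n`: for a commutative ring `A` and distinct maximal
ideals `m₁, m₂` of `A`, the natural map `SL_n(A) → SL_n(A/m₁) × SL_n(A/m₂)` is surjective. -/
theorem stmt2 (A : Type*) [CommRing A] (m₁ m₂ : Ideal A) [m₁.IsMaximal] [m₂.IsMaximal]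
    (hm : m₁ ≠ m₂) (n : ℕ) (hn : 1 ≤ n) :
    Function.Surjective
      (fun γ : Matrix.SpecialLinearGroup (Fin n) A =>
        (Matrix.SpecialLinearGroup.map (Ideal.Quotient.mk m₁) γ,
         Matrix.SpecialLinearGroup.map (Ideal.Quotient.mk m₂) γ)) := by
  rintro ⟨g₁, g₂⟩
  letI : Field (A ⧸ m₁) := Ideal.Quotient.field m₁
  letI : Field (A ⧸ m₂) := Ideal.Quotient.field m₂
  have hsup : m₁ ⊔ m₂ = ⊤ := Ideal.IsMaximal.coprime_of_ne ‹_› ‹_› hm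
  have hsup' : m₂ ⊔ m₁ = ⊤ := by rw [sup_comm]; exact hsup
  set f₁ := Ideal.Quotient.mk m₁
  set f₂ := Ideal.Quotient.mk m₂
  -- component 1
  have hP₁ : ∃ N : Matrix (Fin n) (Fin n) A, N.det = 1 ∧ N.map f₁ = (g₁ : Matrix (Fin n) (Fin n) (A ⧸ m₁)) ∧ N.map f₂ = 1 := by
    apply gen_sl' (fun M => ∃ N : Matrix (Fin n) (Fin n) A, N.det = 1 ∧ N.map f₁ = M ∧ N.map f₂ = 1)
    · exact ⟨1, Matrix.det_one, Matrix.map_one f₁ (_root_.map_zero f₁) (_root_.map_one f₁),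
        Matrix.map_one f₂ (_root_.map_zero f₂) (_root_.map_one f₂)⟩
    · intro i j hij c
      obtain ⟨a, ha₁, ha₂⟩ := crt_pair hsup c (0 : A ⧸ m₂)
      exact ⟨Matrix.transvection i j a, Matrix.det_transvection_of_ne i j hij a,
        by rw [map_transvection' f₁, ha₁],
        by rw [map_transvection' f₂, ha₂, Matrix.transvection_zero]⟩
    · rintro M N ⟨M', hM1, hM2, hM3⟩ ⟨N', hN1, hN2, hN3⟩
      refine ⟨M' * N', by rw [Matrix.det_mul, hM1, hN1, one_mul], ?_, ?_⟩
      · rw [Matrix.map_mul, hM2, hN2]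
      · rw [Matrix.map_mul, hM3, hN3, one_mul]
    · exact g₁.2
  have hP₂ : ∃ N : Matrix (Fin n) (Fin n) A, N.det = 1 ∧ N.map f₂ = (g₂ : Matrix (Fin n) (Fin n) (A ⧸ m₂)) ∧ N.map f₁ = 1 := by
    apply gen_sl' (fun M => ∃ N : Matrix (Fin n) (Fin n) A, N.det = 1 ∧ N.map f₂ = M ∧ N.map f₁ = 1)
    · exact ⟨1, Matrix.det_one, Matrix.map_one f₂ (_root_.map_zero f₂) (_root_.map_one f₂),
        Matrix.map_one f₁ (_root_.map_zero f₁) (_root_.map_one f₁)⟩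
    · intro i j hij c
      obtain ⟨a, ha₂, ha₁⟩ := crt_pair hsup' c (0 : A ⧸ m₁)
      exact ⟨Matrix.transvection i j a, Matrix.det_transvection_of_ne i j hij a,
        by rw [map_transvection' f₂, ha₂],
        by rw [map_transvection' f₁, ha₁, Matrix.transvection_zero]⟩
    · rintro M N ⟨M', hM1, hM2, hM3⟩ ⟨N', hN1, hN2, hN3⟩
      refine ⟨M' * N', by rw [Matrix.det_mul, hM1, hN1, one_mul], ?_, ?_⟩
      · rw [Matrix.map_mul, hM2, hN2]
      · rw [Matrix.map_mul, hM3, hN3, one_mul]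
    · exact g₂.2
  obtain ⟨N₁, hN₁det, hN₁₁, hN₁₂⟩ := hP₁
  obtain ⟨N₂, hN₂det, hN₂₂, hN₂₁⟩ := hP₂
  refine ⟨⟨N₁ * N₂, by rw [Matrix.det_mul, hN₁det, hN₂det, one_mul]⟩, ?_⟩
  have e₁ : (N₁ * N₂).map f₁ = (g₁ : Matrix (Fin n) (Fin n) (A ⧸ m₁)) := by
    rw [Matrix.map_mul, hN₁₁, hN₂₁, mul_one]
  have e₂ : (N₁ * N₂).map f₂ = (g₂ : Matrix (Fin n) (Fin n) (A ⧸ m₂)) := by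
    rw [Matrix.map_mul, hN₁₂, hN₂₂, one_mul]
  refine Prod.ext (Subtype.ext ?_) (Subtype.ext ?_)
  · exact e₁
  · exact e₂
end
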